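/- Let k > 0 and let λ1, λ2 be reals with 0 < λ1 < 1/√2 and λ2 > 1 (and λ1 ≤ λ2). Define M(x) = √((2k + (λ2−λ1)x²)/(2λ2)) + √(2kλ2 − λ1(λ2−λ1)x²) for x ∈ [−√(2k/λ1), √(2k/λ1)]. Then for every x in this interval, M(x) ≤ √(k(λ1+λ2)/(λ1λ2(1+2λ1λ2))) + 2√(kλ1λ2(λ1+λ2)/(1+2λ1λ2)), with equality at the points x = ±√(2kλ2)·√(1−2λ1²)/√(−λ1² + λ1λ2 − 2λ1³λ2 + 2λ1²λ2²). -/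

import Mathlib

/-!
The two radicands `a(x) = (2k + (λ2−λ1)x²)/(2λ2)` and `b(x) = 2kλ2 − λ1(λ2−λ1)x²` satisfy
`A·a(x) + b(x) = 2k(λ1+λ2)` for the constant `A = 2λ1λ2`.  By Cauchy–Schwarz,
`(√a + √b)² ≤ (1 + 1/A)(A·a + b)`, which is the claimed bound `(1 + A)√P` with
`P = k(λ1+λ2)/(λ1λ2(1+A))`; equality holds where `√b = A√a`, i.e. where `a = P` and `b = A²P`,
and these are exactly the points `x = ±xcrit`.
-/

noncomputable def Mfun (k l1 l2 x : ℝ) : ℝ :=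
  Real.sqrt ((2 * k + (l2 - l1) * x ^ 2) / (2 * l2)) +
    Real.sqrt (2 * k * l2 - l1 * (l2 - l1) * x ^ 2)

/-- The claimed maximal value of `M`. -/
noncomputable def Mmax (k l1 l2 : ℝ) : ℝ :=
  Real.sqrt (k * (l1 + l2) / (l1 * l2 * (1 + 2 * l1 * l2))) +
    2 * Real.sqrt (k * l1 * l2 * (l1 + l2) / (1 + 2 * l1 * l2))

/-- The claimed maximizer. -/
noncomputable def xcrit (k l1 l2 : ℝ) : ℝ :=
  Real.sqrt (2 * k * l2) * Real.sqrt (1 - 2 * l1 ^ 2) /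
    Real.sqrt (-l1 ^ 2 + l1 * l2 - 2 * l1 ^ 3 * l2 + 2 * l1 ^ 2 * l2 ^ 2)

theorem Real.sqrt_add_sqrt_le_of_weighted_add_le {A a b p : ℝ} (hA : 0 < A) (ha : 0 ≤ a)
    (hb : 0 ≤ b) (h : A * a + b ≤ A * (1 + A) * p) :
    √a + √b ≤ (1 + A) * √p := by
  have hp : 0 ≤ p := by
    by_contra! hp
    nlinarith [mul_pos (mul_pos hA (by linarith : (0 : ℝ) < 1 + A)) (neg_pos.mpr hp)]
  obtain ⟨u, hu, rfl⟩ : ∃ u, 0 ≤ u ∧ a = u ^ 2 := ⟨√a, Real.sqrt_nonneg a, (Real.sq_sqrt ha).symm⟩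
  obtain ⟨v, hv, rfl⟩ : ∃ v, 0 ≤ v ∧ b = v ^ 2 := ⟨√b, Real.sqrt_nonneg b, (Real.sq_sqrt hb).symm⟩
  rw [Real.sqrt_sq hu, Real.sqrt_sq hv]
  have cauchy_schwarz : A * (u + v) ^ 2 ≤ (1 + A) * (A * u ^ 2 + v ^ 2) := by
    nlinarith [sq_nonneg (A * u - v)]
  have hsq : A * (u + v) ^ 2 ≤ A * ((1 + A) * √p) ^ 2 := by
    rw [mul_pow, Real.sq_sqrt hp]
    nlinarith
  exact le_of_sq_le_sq (le_of_mul_le_mul_left hsq hA) (by positivity)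

section

variable {k l1 l2 : ℝ}

theorem Mfun_neg (x : ℝ) : Mfun k l1 l2 (-x) = Mfun k l1 l2 x := by
  simp only [Mfun, neg_sq]

theorem Mmax_eq_mul_sqrt (hl1 : 0 ≤ l1) (hl2 : 0 ≤ l2) :
    Mmax k l1 l2 =
      (1 + 2 * l1 * l2) * √(k * (l1 + l2) / (l1 * l2 * (1 + 2 * l1 * l2))) := by
  have h : k * l1 * l2 * (l1 + l2) / (1 + 2 * l1 * l2) =
      (l1 * l2) ^ 2 * (k * (l1 + l2) / (l1 * l2 * (1 + 2 * l1 * l2))) := by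
    rcases hl1.eq_or_lt with rfl | hl1
    · simp
    rcases hl2.eq_or_lt with rfl | hl2
    · simp
    field_simp
  rw [Mmax, h, Real.sqrt_mul (sq_nonneg _), Real.sqrt_sq (by positivity)]
  ring

theorem Mfun_le_Mmax (hk : 0 ≤ k) (hl1 : 0 < l1) (hl12 : l1 ≤ l2) {x : ℝ}
    (hx : l1 * x ^ 2 ≤ 2 * k) : Mfun k l1 l2 x ≤ Mmax k l1 l2 := by
  have hl2 : 0 < l2 := hl1.trans_le hl12
  have ha : 0 ≤ (2 * k + (l2 - l1) * x ^ 2) / (2 * l2) := by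
    have := mul_nonneg (sub_nonneg.mpr hl12) (sq_nonneg x)
    positivity
  have hb : 0 ≤ 2 * k * l2 - l1 * (l2 - l1) * x ^ 2 := by
    nlinarith [mul_le_mul_of_nonneg_left hx (sub_nonneg.mpr hl12)]
  rw [Mmax_eq_mul_sqrt hl1.le hl2.le]
  refine Real.sqrt_add_sqrt_le_of_weighted_add_le (by positivity) ha hb (le_of_eq ?_)
  field_simp
  ring

theorem xcrit_sq (hk : 0 ≤ k) (hl1 : 0 ≤ l1) (hl12 : l1 ≤ l2) (hl1_sq : 2 * l1 ^ 2 ≤ 1) :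
    xcrit k l1 l2 ^ 2 = 2 * k * l2 * (1 - 2 * l1 ^ 2) / (l1 * (l2 - l1) * (1 + 2 * l1 * l2)) := by
  have hD : -l1 ^ 2 + l1 * l2 - 2 * l1 ^ 3 * l2 + 2 * l1 ^ 2 * l2 ^ 2 =
      l1 * (l2 - l1) * (1 + 2 * l1 * l2) := by ring
  have hl2 : 0 ≤ l2 := hl1.trans hl12
  rw [xcrit, hD, div_pow, mul_pow, Real.sq_sqrt (by positivity), Real.sq_sqrt (by linarith),
    Real.sq_sqrt (by have := sub_nonneg.mpr hl12; positivity)]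

theorem Mfun_eq_Mmax_of_sq_eq (hl1 : 0 < l1) (hl12 : l1 < l2) {x : ℝ}
    (hx : x ^ 2 = 2 * k * l2 * (1 - 2 * l1 ^ 2) / (l1 * (l2 - l1) * (1 + 2 * l1 * l2))) :
    Mfun k l1 l2 x = Mmax k l1 l2 := by
  have hl2 : 0 < l2 := hl1.trans hl12
  have hl12' : l2 - l1 ≠ 0 := sub_ne_zero.mpr hl12.ne'
  set P := k * (l1 + l2) / (l1 * l2 * (1 + 2 * l1 * l2)) with hP
  have ha : (2 * k + (l2 - l1) * x ^ 2) / (2 * l2) = P := by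
    rw [hx, hP]
    field_simp
    ring
  have hb : 2 * k * l2 - l1 * (l2 - l1) * x ^ 2 = (2 * l1 * l2) ^ 2 * P := by
    rw [hx, hP]
    field_simp
    ring
  rw [Mfun, ha, hb, Real.sqrt_mul (sq_nonneg _), Real.sqrt_sq (by positivity),
    Mmax_eq_mul_sqrt hl1.le hl2.le]
  ring

end

theorem M_max_at_xcrit_general (k l1 l2 : ℝ) (hk : 0 < k)
    (h0 : 0 < l1) (h1 : l1 < 1 / Real.sqrt 2) (h2 : 1 < l2) :
    (∀ x ∈ Set.Icc (-Real.sqrt (2 * k / l1)) (Real.sqrt (2 * k / l1)),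
        Mfun k l1 l2 x ≤ Mmax k l1 l2) ∧
    Mfun k l1 l2 (xcrit k l1 l2) = Mmax k l1 l2 ∧
    Mfun k l1 l2 (-(xcrit k l1 l2)) = Mmax k l1 l2 := by
  have hl1_sq : 2 * l1 ^ 2 < 1 := by
    rw [lt_div_iff₀ (by positivity)] at h1
    nlinarith [Real.sq_sqrt (zero_le_two : (0 : ℝ) ≤ 2), mul_pos h0 (by positivity : 0 < √2)]
  have hl12 : l1 < l2 := by nlinarith
  have h_crit : Mfun k l1 l2 (xcrit k l1 l2) = Mmax k l1 l2 :=
    Mfun_eq_Mmax_of_sq_eq h0 hl12 (xcrit_sq hk.le h0.le hl12.le hl1_sq.le)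
  refine ⟨fun x hx => Mfun_le_Mmax hk.le h0 hl12.le ?_, h_crit, (Mfun_neg _).trans h_crit⟩
  have := sq_le_sq' hx.1 hx.2
  rw [Real.sq_sqrt (by positivity), le_div_iff₀ h0] at this
  linarith

theorem M_max_at_xcrit (k l1 l2 : ℝ) (hk : 0 < k)
    (h0 : 0 < l1) (h1 : l1 < 1 / Real.sqrt 2) (h12 : l1 ≤ l2) (h2 : 1 < l2) :
    (∀ x ∈ Set.Icc (-Real.sqrt (2 * k / l1)) (Real.sqrt (2 * k / l1)),
        Mfun k l1 l2 x ≤ Mmax k l1 l2) ∧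
    Mfun k l1 l2 (xcrit k l1 l2) = Mmax k l1 l2 ∧
    Mfun k l1 l2 (-(xcrit k l1 l2)) = Mmax k l1 l2 :=
  M_max_at_xcrit_general k l1 l2 hk h0 h1 h2
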